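/- arXiv:2304.04114 — 2 statements merged into one kernel-verified Lean document; each statement's English description precedes it below -/
import Mathlib

section
/- The negative cone G⁻ of a right ℓ-group G, equipped with the operation x → y := (y x⁻¹) ∧ e and the element e, is an L-algebra: it satisfies x → x = x → e = e, e → x = x, (x → y) → (x → z) = (y → x) → (y → z), and (x → y = e ∧ y → x = e) → x = y. -/
/-!
Right multiplication distributes over `⊓` in a right ℓ-group, so `x → y = (y ⊓ x) x⁻¹`.
With this normal form, `(x → y) → (x → z) = (x ⊓ y) → z`, which is symmetric in `x` and `y`.
-/

/-- The arrow operation `x → y := (y * x⁻¹) ⊓ 1` on the negative cone of a right ℓ-group. -/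
def arr {G : Type*} [Lattice G] [Group G] (x y : G) : G := (y * x⁻¹) ⊓ 1

section RightLatticeOrderedGroup

variable {G : Type*} [Lattice G] [Group G]

theorem arr_self (x : G) : arr x x = 1 := by
  rw [arr, mul_inv_cancel, inf_idem]

theorem one_arr {x : G} (hx : x ≤ 1) : arr 1 x = x := by
  rw [arr, inv_one, mul_one, inf_eq_left.2 hx]

variable [MulRightMono G]

theorem arr_eq_inf_mul_inv (x y : G) : arr x y = (y ⊓ x) * x⁻¹ := by
  rw [arr, inf_mul, mul_inv_cancel]

theorem arr_eq_one {x y : G} : arr x y = 1 ↔ x ≤ y := by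
  rw [arr, inf_eq_right, le_mul_inv_iff_mul_le, one_mul]

theorem arr_one {x : G} (hx : x ≤ 1) : arr x 1 = 1 :=
  arr_eq_one.2 hx

theorem arr_arr (x y z : G) : arr (arr x y) (arr x z) = arr (x ⊓ y) z := by
  simp only [arr_eq_inf_mul_inv]
  rw [← inf_mul, ← inf_inf_distrib_right, inf_assoc, inf_comm y x, mul_inv_rev, inv_inv,
    mul_assoc, inv_mul_cancel_left]

end RightLatticeOrderedGroup

theorem cones_are_l_algebras_general {G : Type*} [Lattice G] [Group G]
    [CovariantClass G G (Function.swap (· * ·)) (· ≤ ·)]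
    (x y z : G) (hx : x ≤ 1) :
    arr x x = 1 ∧ arr x 1 = 1 ∧
    arr 1 x = x ∧
    arr (arr x y) (arr x z) = arr (arr y x) (arr y z) ∧
    (arr x y = 1 → arr y x = 1 → x = y) := by
  refine ⟨arr_self x, arr_one hx, one_arr hx, ?_, fun hxy hyx => ?_⟩
  · rw [arr_arr, arr_arr, inf_comm]
  · exact le_antisymm (arr_eq_one.1 hxy) (arr_eq_one.1 hyx)

/-- The negative cone of a right ℓ-group, with `x → y := (y x⁻¹) ⊓ 1` and the element `1`,
is an L-algebra. -/
theorem cones_are_l_algebras {G : Type*} [Lattice G] [Group G]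
    [CovariantClass G G (Function.swap (· * ·)) (· ≤ ·)]
    (x y z : G) (hx : x ≤ 1) (hy : y ≤ 1) (hz : z ≤ 1) :
    arr x x = 1 ∧ arr x 1 = 1 ∧
    arr 1 x = x ∧
    arr (arr x y) (arr x z) = arr (arr y x) (arr y z) ∧
    (arr x y = 1 → arr y x = 1 → x = y) :=
  cones_are_l_algebras_general x y z hx
end

section
/- Let G be a modular noetherian right ℓ-group with strong order unit s, and let g ∈ G⁻ have right-normal factorization g = g_k g_{k-1} ⋯ g₁. Then the sequence of degrees deg(g_i) is non-increasing in i, i.e., deg(g_{i+1}) ≤ deg(g_i) for 1 ≤ i < k. -/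
/-- An element `s` of a right ℓ-group is normal if left multiplication by `s` preserves
the lattice operations. -/
def IsNormal {G : Type*} [Lattice G] [Group G] (s : G) : Prop :=
  ∀ x y : G, s * (x ⊓ y) = s * x ⊓ s * y ∧ s * (x ⊔ y) = s * x ⊔ s * y

/-- A strong order unit: a normal element `s > 1` such that every `g` satisfies
`g ≤ sⁿ` for some integer `n`. -/
def IsStrongOrderUnit {G : Type*} [Lattice G] [Group G] (s : G) : Prop :=
  1 < s ∧ IsNormal s ∧ ∀ g : G, ∃ n : ℤ, g ≤ s ^ n

/-- A right ℓ-group is noetherian if every ascending chain bounded above and every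
descending chain bounded below stabilizes. -/
def IsLatticeNoetherian (G : Type*) [Lattice G] : Prop :=
  (∀ f : ℕ → G, Monotone f → (∃ h : G, ∀ n, f n ≤ h) → ∃ N, ∀ m, N ≤ m → f m = f N) ∧
  (∀ f : ℕ → G, Antitone f → (∃ h : G, ∀ n, h ≤ f n) → ∃ N, ∀ m, N ≤ m → f m = f N)

/-! Right translation sends a cover `a ⋖ b` to the cover `a b⁻¹ ⋖ 1`, so `d a = d b + 1`.
Noetherianity allows induction along covers, which makes `d` antitone and, since in a modular
lattice covers survive joining with an element meeting both ends equally, a valuation: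
`d (x ⊔ y) + d (x ⊓ y) = d x + d y`. For `c = g ⊔ v`, `b = g ⊔ s v`, `a = g ⊔ s² v` the two
factor degrees are `d c - d b` and `d b - d a`; normality of `s ≥ 1` gives `s c ⊔ a = s b` and
`b ≤ s c ⊓ a`, so the valuation identity and antitonicity yield `d c - d b ≤ d b - d a`. -/

namespace IsLatticeNoetherian

variable {G : Type*} [Lattice G]

theorem wellFoundedGT_Iic (hG : IsLatticeNoetherian G) (b : G) : WellFoundedGT (Set.Iic b) := by
  rw [wellFoundedGT_iff_monotone_chain_condition]
  intro f
  obtain ⟨N, hN⟩ := hG.1 (fun n => f n) (fun _ _ h => f.mono h) ⟨b, fun n => (f n).2⟩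
  exact ⟨N, fun m hm => Subtype.ext (hN m hm).symm⟩

theorem wellFoundedLT_Ici (hG : IsLatticeNoetherian G) (a : G) : WellFoundedLT (Set.Ici a) := by
  rw [← wellFoundedGT_dual_iff, wellFoundedGT_iff_monotone_chain_condition]
  intro f
  obtain ⟨N, hN⟩ := hG.2 (fun n => (OrderDual.ofDual (f n) : Set.Ici a)) (fun _ _ h => f.mono h)
    ⟨a, fun n => (OrderDual.ofDual (f n)).2⟩
  exact ⟨N, fun m hm => congrArg OrderDual.toDual (Subtype.ext (hN m hm).symm)⟩

theorem exists_le_covBy_of_lt (hG : IsLatticeNoetherian G) {a b : G} (h : a < b) :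
    ∃ c, a ≤ c ∧ c ⋖ b := by
  have := hG.wellFoundedGT_Iic b
  obtain ⟨c, hc, hac⟩ := (eq_top_or_exists_le_coatom (⟨a, h.le⟩ : Set.Iic b)).resolve_left
    fun h' => h.ne (congrArg Subtype.val h')
  exact ⟨c, hac, Set.Iic.isCoatom_iff.1 hc⟩

theorem induction_on_Ici (hG : IsLatticeNoetherian G) {a : G} {P : G → Prop}
    (step : ∀ t, a ≤ t → (∀ u, a ≤ u → u < t → P u) → P t) {t : G} (ht : a ≤ t) :
    P t := by
  have := hG.wellFoundedLT_Ici a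
  exact WellFoundedLT.induction (motive := fun u : Set.Ici a => P u) ⟨t, ht⟩
    fun u ih => step u u.2 fun v hav hvu => ih ⟨v, hav⟩ hvu

end IsLatticeNoetherian

theorem CovBy.sup_right_of_inf_eq {α : Type*} [Lattice α] [IsModularLattice α] {z t : α}
    (h : z ⋖ t) (y : α) (hzy : z ⊓ y = t ⊓ y) : z ⊔ y ⋖ t ⊔ y := by
  have hmeet : t ⊓ (z ⊔ y) = z := by
    rw [inf_comm, sup_inf_assoc_of_le y h.le, inf_comm y, ← hzy]
    exact sup_eq_left.2 inf_le_left
  have := covBy_sup_of_inf_covBy_left (hmeet ▸ h)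
  rwa [← sup_assoc, sup_eq_left.2 h.le] at this

theorem deg_mul_inv {G : Type*} [Group G] {d : G → ℤ}
    (hd : ∀ a b : G, d (a * b) = d a + d b) (a b : G) : d (a * b⁻¹) = d a - d b := by
  have := hd (a * b⁻¹) b
  rw [inv_mul_cancel_right] at this
  omega

section Degree

variable {G : Type*} [Lattice G] [Group G] [MulRightMono G] {d : G → ℤ}

theorem deg_eq_add_one_of_covBy (hd : ∀ a b : G, d (a * b) = d a + d b)
    (hatom : ∀ x : G, x ⋖ 1 → d x = 1) {a b : G} (h : a ⋖ b) : d a = d b + 1 := by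
  have hcov : a * b⁻¹ ⋖ 1 := by
    simpa using (apply_covBy_apply_iff (OrderIso.mulRight b⁻¹)).2 h
  have := hatom _ hcov
  rw [deg_mul_inv hd] at this
  omega

theorem deg_antitone (hG : IsLatticeNoetherian G) (hd : ∀ a b : G, d (a * b) = d a + d b)
    (hatom : ∀ x : G, x ⋖ 1 → d x = 1) : Antitone d := by
  intro a b hab
  refine hG.induction_on_Ici (P := fun b => d b ≤ d a) (fun b hab ih => ?_) hab
  rcases hab.eq_or_lt with rfl | hlt
  · exact le_rfl
  obtain ⟨c, hac, hcb⟩ := hG.exists_le_covBy_of_lt hlt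
  have := deg_eq_add_one_of_covBy hd hatom hcb
  have := ih c hac hcb.lt
  omega

theorem deg_sup_add_deg_inf [IsModularLattice G] (hG : IsLatticeNoetherian G)
    (hd : ∀ a b : G, d (a * b) = d a + d b) (hatom : ∀ x : G, x ⋖ 1 → d x = 1) (x y : G) :
    d (x ⊔ y) + d (x ⊓ y) = d x + d y := by
  suffices ∀ t, x ⊓ y ≤ t → t ≤ x → d (t ⊔ y) + d (t ⊓ y) = d t + d y from
    this x inf_le_left le_rfl
  refine fun t hxt => hG.induction_on_Ici
    (P := fun t => t ≤ x → d (t ⊔ y) + d (t ⊓ y) = d t + d y) (fun t hxt ih htx => ?_) hxt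
  have hty : t ⊓ y = x ⊓ y := le_antisymm (inf_le_inf_right y htx) (le_inf hxt inf_le_right)
  by_cases hy : t ≤ y
  · rw [sup_eq_right.2 hy, inf_eq_left.2 hy, add_comm]
  obtain ⟨z, hz, hzt⟩ := hG.exists_le_covBy_of_lt (inf_lt_left.2 hy)
  have hzy : z ⊓ y = t ⊓ y :=
    le_antisymm (inf_le_inf_right y hzt.le) (le_inf hz inf_le_right)
  have := ih z (hty ▸ hz) hzt.lt (hzt.le.trans htx)
  rw [hzy] at this
  have := deg_eq_add_one_of_covBy hd hatom hzt
  have := deg_eq_add_one_of_covBy hd hatom (hzt.sup_right_of_inf_eq y hzy)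
  omega

theorem deg_sup_mul_inv_le [IsModularLattice G] (hG : IsLatticeNoetherian G)
    (hd : ∀ a b : G, d (a * b) = d a + d b) (hatom : ∀ x : G, x ⋖ 1 → d x = 1)
    {s : G} (hs : IsNormal s) (hs1 : 1 ≤ s) (g v : G) :
    d ((g ⊔ v) * (g ⊔ s * v)⁻¹) ≤ d ((g ⊔ s * v) * (g ⊔ s * (s * v))⁻¹) := by
  have hg : g ≤ s * g := le_mul_of_one_le_left' hs1
  have hv : s * v ≤ s * (s * v) := le_mul_of_one_le_left' hs1
  have hjoin : s * (g ⊔ v) ⊔ (g ⊔ s * (s * v)) = s * (g ⊔ s * v) := by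
    rw [(hs g v).2, (hs g (s * v)).2]
    exact le_antisymm (sup_le (sup_le_sup_left hv _) (sup_le_sup_right hg _))
      (sup_le_sup le_sup_left le_sup_right)
  have hmeet : g ⊔ s * v ≤ s * (g ⊔ v) ⊓ (g ⊔ s * (s * v)) := by
    rw [(hs g v).2]
    exact le_inf (sup_le_sup_right hg _) (sup_le_sup_left hv _)
  have hval := deg_sup_add_deg_inf hG hd hatom (s * (g ⊔ v)) (g ⊔ s * (s * v))
  rw [hjoin, hd s, hd s] at hval
  have := deg_antitone hG hd hatom hmeet
  rw [deg_mul_inv hd, deg_mul_inv hd]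
  omega

end Degree

theorem iota_is_nonincreasing_general {G : Type*} [Lattice G] [Group G]
    [CovariantClass G G (Function.swap (· * ·)) (· ≤ ·)] [IsModularLattice G]
    (hG : IsLatticeNoetherian G) (s : G) (hs : IsStrongOrderUnit s)
    (d : G → ℤ) (hd : ∀ a b : G, d (a * b) = d a + d b)
    (hatom : ∀ x : G, x ⋖ 1 → d x = 1)
    (g : G)
    (k : ℕ) :
    ∀ i : ℕ, 1 ≤ i → i < k →
      d ((g ⊔ s ^ (-(i : ℤ) - 1)) * (g ⊔ s ^ (-(i : ℤ)))⁻¹) ≤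
        d ((g ⊔ s ^ (-(i : ℤ))) * (g ⊔ s ^ (-(i : ℤ) + 1))⁻¹) := by
  intro i _ _
  have h₁ : s * s ^ (-(i : ℤ) - 1) = s ^ (-(i : ℤ)) := by group
  have h₂ : s * s ^ (-(i : ℤ)) = s ^ (-(i : ℤ) + 1) := by group
  have := deg_sup_mul_inv_le hG hd hatom hs.2.1 hs.1.le g (s ^ (-(i : ℤ) - 1))
  rwa [h₁, h₂] at this

/-- In a modular noetherian right ℓ-group with strong order unit `s`, the degrees of the
right-normal factors `g_i = (g ⊔ s^{-i})(g ⊔ s^{-(i-1)})⁻¹` of `g ≤ 1` are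
non-increasing: `deg g_{i+1} ≤ deg g_i` for `1 ≤ i < k`. -/
theorem iota_is_nonincreasing {G : Type*} [Lattice G] [Group G]
    [CovariantClass G G (Function.swap (· * ·)) (· ≤ ·)] [IsModularLattice G]
    (hG : IsLatticeNoetherian G) (s : G) (hs : IsStrongOrderUnit s)
    (d : G → ℤ) (hd : ∀ a b : G, d (a * b) = d a + d b)
    (hatom : ∀ x : G, x ⋖ 1 → d x = 1)
    (g : G) (hg : g ≤ 1)
    (k : ℕ) (hk : s ^ (-(k : ℤ)) ≤ g) (hkmin : ∀ j : ℕ, j < k → ¬ s ^ (-(j : ℤ)) ≤ g) :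
    ∀ i : ℕ, 1 ≤ i → i < k →
      d ((g ⊔ s ^ (-(i : ℤ) - 1)) * (g ⊔ s ^ (-(i : ℤ)))⁻¹) ≤
        d ((g ⊔ s ^ (-(i : ℤ))) * (g ⊔ s ^ (-(i : ℤ) + 1))⁻¹) :=
  iota_is_nonincreasing_general hG s hs d hd hatom g k
end
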